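/- Let X := G^{1/2} B, where G is the (positive definite) Gram matrix of the basis {𝛟_k}, let r = rank(X), and let (σ_i, v_i, u_i), i = 1,…,r, be the singular triples of X with σ_i > 0 and orthonormal {v_i} ⊂ ℝ^K, {u_i} ⊂ ℝ^{Ld}. Define ψ_i := 𝒫(G^{−1/2} u_i). Then the collection {ψ_i}_{i=1}^r is an orthonormal basis for the range R(𝒳) of the trajectory operator 𝒳: the ψ_i are pairwise orthonormal in ℍ_d^L and their span equals R(𝒳). -/

import Mathlib

open MeasureTheory RealInnerProductSpace

noncomputable section

set_option maxHeartbeats 1000000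
set_option synthInstance.maxHeartbeats 1000000

/-- `Fsp T` is the Hilbert space `L²(T)` of square-integrable real functions on a
(compact) subset `T ⊆ ℝ^n`. -/
abbrev Fsp {n : ℕ} (T : Set (EuclideanSpace ℝ (Fin n))) : Type :=
  Lp ℝ 2 (volume.restrict T)

variable {p : ℕ} {m : Fin p → ℕ} {T : ∀ j, Set (EuclideanSpace ℝ (Fin (m j)))}
  {d : Fin p → ℕ}

/-- `F_j^{(d)} = sp{ν_i^{(j)}}_{i=1}^{d_j}`, the span of the chosen basis functions of the
`j`-th variable. -/
abbrev Fd (ν : ∀ j, Fin (d j) → Fsp (T j)) (j : Fin p) : Submodule ℝ (Fsp (T j)) :=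
  Submodule.span ℝ (Set.range (ν j))

/-- `ℍ_d = F₁^{(d)} × ⋯ × F_p^{(d)}`. -/
abbrev Hd (ν : ∀ j, Fin (d j) → Fsp (T j)) : Type :=
  PiLp 2 fun j => Fd ν j

/-- The index set `{1, …, d}`, `d = ∑ⱼ dⱼ`, encoded as pairs `q = (j_q, ℓ_q)`. -/
abbrev Idx (d : Fin p → ℕ) : Type := Σ j : Fin p, Fin (d j)

/-- `ν⃗_q ∈ ℍ_d`: the `p`-tuple whose components are all the zero function except the
`j_q`-th one, which equals `ν_{ℓ_q}^{(j_q)}`. -/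
def nuVec (ν : ∀ j, Fin (d j) → Fsp (T j)) (q : Idx d) : Hd ν :=
  WithLp.toLp 2 (Pi.single q.1 ⟨ν q.1 q.2, Submodule.subset_span ⟨q.2, rfl⟩⟩)

/-- `ℍ_d^L`, the Cartesian product of `L` copies of `ℍ_d`. -/
abbrev HdL (L : ℕ) (ν : ∀ j, Fin (d j) → Fsp (T j)) : Type :=
  PiLp 2 fun _ : Fin L => Hd ν

/-- The index set `{1, …, Ld}` encoded as pairs `k = (q_k, r_k)`. -/
abbrev IdxL (d : Fin p → ℕ) (L : ℕ) : Type := Idx d × Fin L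

/-- `𝛟_k ∈ ℍ_d^L`: the `L`-tuple whose components are all zero except the `r_k`-th one,
which equals `ν⃗_{q_k}`. -/
def phiVec (ν : ∀ j, Fin (d j) → Fsp (T j)) (L : ℕ) (k : IdxL d L) : HdL L ν :=
  WithLp.toLp 2 (Pi.single k.2 (nuVec ν k.1))

/-- The linear operator `𝒫 : ℝ^{Ld} → ℍ_d^L`, `𝒫(b) = ∑ᵢ bᵢ 𝛟ᵢ`. -/
def Pop (ν : ∀ j, Fin (d j) → Fsp (T j)) (L : ℕ)
    (b : EuclideanSpace ℝ (IdxL d L)) : HdL L ν :=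
  ∑ i : IdxL d L, b i • phiVec ν L i

/-- The multivariate functional lagged vectors `𝐱ₖ = (ŷ_k, …, ŷ_{k+L-1}) ∈ ℍ_d^L`. -/
def laggedHd (ν : ∀ j, Fin (d j) → Fsp (T j)) {N L K : ℕ} (hK : K + L = N + 1)
    (y : Fin N → Hd ν) (k : Fin K) : HdL L ν :=
  WithLp.toLp 2 (fun i : Fin L => y ⟨k.1 + i.1, by omega⟩)

/-- The trajectory operator `𝒳 : ℝ^K → ℍ_d^L`, `𝒳(a) = ∑ₖ aₖ 𝐱ₖ`. -/
def trajHd (ν : ∀ j, Fin (d j) → Fsp (T j)) {N L K : ℕ} (hK : K + L = N + 1)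
    (y : Fin N → Hd ν) (a : EuclideanSpace ℝ (Fin K)) : HdL L ν :=
  ∑ k : Fin K, a k • laggedHd ν hK y k

/-- The square root of a positive semidefinite matrix, as `Matrix.PosSemidef.sqrt` was defined
in Mathlib (Dec 2024); it has since been removed from Mathlib. -/
def Matrix.PosSemidef.sqrt {𝕜 : Type*} [RCLike 𝕜] [PartialOrder 𝕜] [StarOrderedRing 𝕜] {n : Type*} [Fintype n] [DecidableEq n]
    {A : Matrix n n 𝕜} (hA : A.PosSemidef) : Matrix n n 𝕜 :=
  hA.1.eigenvectorUnitary.1 * Matrix.diagonal ((↑) ∘ (√·) ∘ hA.1.eigenvalues) *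
    (star hA.1.eigenvectorUnitary : Matrix n n 𝕜)

lemma euclid_sum_apply' {n K : Type*} [Fintype K] (b : K → EuclideanSpace ℝ n)
    (a : K → ℝ) (i : n) : (∑ k, a k • b k) i = ∑ k, a k * b k i := by
  induction (Finset.univ : Finset K) using Finset.cons_induction with
  | empty => simp
  | cons k s hk ih => rw [Finset.sum_cons, Finset.sum_cons, ← ih]; rfl

lemma psd_sqrt_mul_self_real {n : Type*} [Fintype n] [DecidableEq n]
    {A : Matrix n n ℝ} (hA : A.PosSemidef) : hA.sqrt * hA.sqrt = A := by
  have hspec := hA.1.spectral_theorem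
  rw [Unitary.conjStarAlgAut_apply] at hspec
  unfold Matrix.PosSemidef.sqrt
  set U := (hA.1.eigenvectorUnitary : Matrix n n ℝ) with hUdef
  have hU : star U * U = 1 := Unitary.coe_star_mul_self _
  calc _ = U * (Matrix.diagonal ((RCLike.ofReal : ℝ → ℝ) ∘ (√·) ∘ hA.1.eigenvalues)
        * Matrix.diagonal ((RCLike.ofReal : ℝ → ℝ) ∘ (√·) ∘ hA.1.eigenvalues)) * star U := by
        simp only [Matrix.mul_assoc]
        rw [← Matrix.mul_assoc (star U) U, hU, Matrix.one_mul]
    _ = A := by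
        rw [Matrix.diagonal_mul_diagonal]
        conv_rhs => rw [hspec]
        congr 2
        ext i j
        simp [Matrix.diagonal_apply, Real.mul_self_sqrt (hA.eigenvalues_nonneg i)]

lemma psd_sqrt_transpose_real {n : Type*} [Fintype n] [DecidableEq n]
    {A : Matrix n n ℝ} (hA : A.PosSemidef) : hA.sqrt.transpose = hA.sqrt := by
  unfold Matrix.PosSemidef.sqrt
  rw [Matrix.transpose_mul, Matrix.transpose_mul, Matrix.diagonal_transpose, Matrix.mul_assoc]
  congr 1

/-- **Statement 10.** Let `X = G^{1/2} B` with `G` the (positive definite) Gram matrix of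
the basis `{𝛟ₖ}`, let `r = rank X`, and let
`(σᵢ, vᵢ, uᵢ)`, `i = 1, …, r`, be the singular triples of `X` (`σᵢ > 0`, `{vᵢ} ⊆ ℝ^K` and
`{uᵢ} ⊆ ℝ^{Ld}` orthonormal). Define `ψᵢ = 𝒫(G^{-1/2} uᵢ)`. Then `{ψᵢ}_{i=1}^r` is an
orthonormal basis for the range `R(𝒳)` of the trajectory operator `𝒳`: the `ψᵢ` are
pairwise orthonormal in `ℍ_d^L` and their span equals `R(𝒳)`. -/
theorem recipe_left_singular_functions_orthonormal_basis_of_range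
    {p : ℕ} {m : Fin p → ℕ} {T : ∀ j, Set (EuclideanSpace ℝ (Fin (m j)))}
    (hT : ∀ j, IsCompact (T j)) {d : Fin p → ℕ}
    (ν : ∀ j, Fin (d j) → Fsp (T j)) (hν : ∀ j, LinearIndependent ℝ (ν j))
    {N L K : ℕ} (hL : 0 < L) (hLN : 2 * L < N) (hK : K + L = N + 1)
    (y : Fin N → Hd ν)
    (b : Fin K → EuclideanSpace ℝ (IdxL d L))
    (hb : ∀ k : Fin K, laggedHd ν hK y k = Pop ν L (b k))
    (G : Matrix (IdxL d L) (IdxL d L) ℝ)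
    (hGdef : G = Matrix.of fun i i' : IdxL d L => ⟪phiVec ν L i, phiVec ν L i'⟫)
    (hG : G.PosDef)
    (X : Matrix (IdxL d L) (Fin K) ℝ)
    (hX : X = hG.posSemidef.sqrt * Matrix.of (fun i (k : Fin K) => b k i))
    (r : ℕ) (hr : r = X.rank) (σ : Fin r → ℝ) (v : Fin r → EuclideanSpace ℝ (Fin K))
    (u : Fin r → EuclideanSpace ℝ (IdxL d L))
    (hσ : ∀ i, 0 < σ i) (hv : Orthonormal ℝ v) (hu : Orthonormal ℝ u)
    (hXv : ∀ i, X.mulVec (v i) = σ i • u i)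
    (hXtu : ∀ i, X.transpose.mulVec (u i) = σ i • v i)
    (ψ : Fin r → HdL L ν)
    (hψ : ∀ i, ψ i = Pop ν L (WithLp.toLp 2 ((hG.posSemidef.sqrt)⁻¹.mulVec (u i))))
    :
    Orthonormal ℝ ψ
      ∧ (Submodule.span ℝ (Set.range ψ) : Set (HdL L ν)) = Set.range (trajHd ν hK y) := by

  classical
  set S := hG.posSemidef.sqrt with hSdef
  have hSS : S * S = G := psd_sqrt_mul_self_real hG.posSemidef
  have hSherm : S.transpose = S := psd_sqrt_transpose_real hG.posSemidef
  have hSdetUnit : IsUnit S.det := by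
    have h1 : S.det * S.det = G.det := by rw [← Matrix.det_mul, hSS]
    have h2 : (0:ℝ) < G.det := hG.det_pos
    have : S.det ≠ 0 := by
      intro h; rw [h, mul_zero] at h1; exact absurd h1.symm (ne_of_gt h2)
    exact isUnit_iff_ne_zero.mpr this
  -- the linear map 𝒫
  let Plin : EuclideanSpace ℝ (IdxL d L) →ₗ[ℝ] HdL L ν :=
    { toFun := Pop ν L
      map_add' := by
        intro a c
        simp [Pop, add_smul, Finset.sum_add_distrib]
      map_smul' := by
        intro t a
        simp [Pop, smul_smul, Finset.smul_sum] }
  have hPlin : ∀ a, Plin a = Pop ν L a := fun _ => rfl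
  -- inner products under 𝒫
  have hPinner : ∀ a c : EuclideanSpace ℝ (IdxL d L),
      ⟪Pop ν L a, Pop ν L c⟫ = dotProduct a (G.mulVec c) := by
    intro a c
    simp only [Pop, sum_inner, inner_sum, real_inner_smul_left, real_inner_smul_right,
      dotProduct, Matrix.mulVec, hGdef, Matrix.of_apply]
    rw [Finset.sum_comm]
    refine Finset.sum_congr rfl fun i _ => ?_
    rw [Finset.mul_sum]
    exact Finset.sum_congr rfl fun j _ => by rw [real_inner_smul_left (F := HdL L ν), real_inner_smul_right (F := HdL L ν)]; ring
  -- dot products of Euclidean vectors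
  have hdot : ∀ (x z : EuclideanSpace ℝ (IdxL d L)), dotProduct x z = ⟪x, z⟫ := by
    intro x z
    simp [PiLp.inner_apply, RCLike.inner_apply, dotProduct, mul_comm]
  -- the key matrix identity
  have hmat : ∀ x z : EuclideanSpace ℝ (IdxL d L),
      dotProduct (S⁻¹.mulVec x) (G.mulVec (S⁻¹.mulVec z)) = dotProduct x z := by
    intro x z
    have h1 : G.mulVec (S⁻¹.mulVec z) = S.mulVec z := by
      rw [Matrix.mulVec_mulVec, ← hSS, Matrix.mul_assoc, Matrix.mul_nonsing_inv _ hSdetUnit,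
        Matrix.mul_one]
    have hSinvT : S⁻¹.transpose = S⁻¹ := by
      rw [Matrix.transpose_nonsing_inv, hSherm]
    rw [h1, show S⁻¹.mulVec x = Matrix.vecMul x S⁻¹ from by
        rw [← Matrix.vecMul_transpose, hSinvT],
      ← Matrix.dotProduct_mulVec, Matrix.mulVec_mulVec,
      Matrix.nonsing_inv_mul _ hSdetUnit, Matrix.one_mulVec]
  -- orthonormality
  have horth : Orthonormal ℝ ψ := by
    rw [orthonormal_iff_ite]
    intro i j
    have := orthonormal_iff_ite.mp hu i j
    rw [hψ, hψ, hPinner, hmat, hdot]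
    exact this
  refine ⟨horth, ?_⟩
  -- the matrix B
  set Bm : Matrix (IdxL d L) (Fin K) ℝ := Matrix.of (fun i (k : Fin K) => b k i) with hBm
  have hBmulVec : ∀ a : Fin K → ℝ, WithLp.toLp 2 (Bm.mulVec a) = ∑ k, a k • b k := by
    intro a
    ext i
    rw [euclid_sum_apply']
    simp only [Matrix.mulVec, dotProduct, hBm, Matrix.of_apply]
    exact Finset.sum_congr rfl fun k _ => mul_comm _ _
  have hBrange : LinearMap.range (Matrix.toEuclideanLin Bm) = Submodule.span ℝ (Set.range b) := by
    ext x
    simp only [LinearMap.mem_range, Matrix.toLpLin_apply,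
      Submodule.mem_span_range_iff_exists_fun]
    constructor
    · rintro ⟨a, ha⟩; exact ⟨a.ofLp, by rw [← hBmulVec]; exact ha⟩
    · rintro ⟨a, ha⟩; exact ⟨WithLp.toLp 2 a, by rw [hBmulVec]; exact ha⟩
  -- span of u equals range of X
  have hspanU : Submodule.span ℝ (Set.range u) = LinearMap.range (Matrix.toEuclideanLin X) := by
    refine Submodule.eq_of_le_of_finrank_eq ?_ ?_
    · rw [Submodule.span_le]
      rintro _ ⟨i, rfl⟩
      refine ⟨(σ i)⁻¹ • v i, ?_⟩
      rw [Matrix.toLpLin_apply, WithLp.ofLp_smul, Matrix.mulVec_smul, hXv, smul_smul,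
        inv_mul_cancel₀ (ne_of_gt (hσ i)), one_smul]
    · rw [finrank_span_eq_card hu.linearIndependent, Fintype.card_fin]
      rw [hr]
      rw [X.rank_eq_finrank_range_toLin (PiLp.basisFun 2 ℝ _) (PiLp.basisFun 2 ℝ _)]; rfl
  -- span of w equals span of b
  set w : Fin r → EuclideanSpace ℝ (IdxL d L) := fun i => WithLp.toLp 2 (S⁻¹.mulVec (u i)) with hw
  have hkey : Submodule.span ℝ (Set.range w) = Submodule.span ℝ (Set.range b) := by
    have h1 : ⇑(Matrix.toEuclideanLin S⁻¹) '' Set.range u = Set.range w := by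
      rw [← Set.range_comp]
      exact congrArg Set.range (funext fun i => Matrix.toLpLin_apply _ _ _ _)
    calc Submodule.span ℝ (Set.range w)
        = Submodule.map (Matrix.toEuclideanLin S⁻¹) (Submodule.span ℝ (Set.range u)) := by
          rw [Submodule.map_span (Matrix.toEuclideanLin S⁻¹), h1]
      _ = Submodule.map (Matrix.toEuclideanLin S⁻¹) (LinearMap.range (Matrix.toEuclideanLin X)) := by rw [hspanU]
      _ = LinearMap.range (Matrix.toEuclideanLin S⁻¹ ∘ₗ Matrix.toEuclideanLin X) := (LinearMap.range_comp _ _).symm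
      _ = LinearMap.range (Matrix.toEuclideanLin Bm) := by
          rw [← Matrix.toLpLin_mul_same, hX, ← Matrix.mul_assoc,
            Matrix.nonsing_inv_mul _ hSdetUnit, Matrix.one_mul]
      _ = Submodule.span ℝ (Set.range b) := hBrange
  -- span of ψ equals span of lagged vectors
  have hspan : Submodule.span ℝ (Set.range ψ) =
      Submodule.span ℝ (Set.range (laggedHd ν hK y)) := by
    have h1 : Set.range ψ = ⇑Plin '' Set.range w := by
      rw [← Set.range_comp]
      exact congrArg Set.range (funext fun i => hψ i)
    have h2 : Set.range (laggedHd ν hK y) = ⇑Plin '' Set.range b := by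
      rw [← Set.range_comp]
      exact congrArg Set.range (funext fun k => hb k)
    rw [h1, h2, ← Submodule.map_span Plin (Set.range w),
      ← Submodule.map_span Plin (Set.range b), hkey]
  -- range of the trajectory operator
  have hrange : Set.range (trajHd ν hK y) =
      (Submodule.span ℝ (Set.range (laggedHd ν hK y)) : Set (HdL L ν)) := by
    ext z
    simp only [Set.mem_range, SetLike.mem_coe, Submodule.mem_span_range_iff_exists_fun]
    constructor
    · rintro ⟨a, ha⟩; exact ⟨a, by rw [← ha]; rfl⟩
    · rintro ⟨a, ha⟩; exact ⟨WithLp.toLp 2 a, ha⟩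
  rw [hspan, hrange]
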